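/- Let a, b, c be real numbers and let S(x,y,z) = x⁴y² + y⁴z² + z⁴x² − 3x²y²z² be the Choi–Lam form. Then the octic form (a²x² + b²y² + c²z²)·S(x,y,z) is a sum of squares of polynomials if and only if 2(a²b² + a²c² + b²c²) ≥ a⁴ + b⁴ + c⁴. -/

import Mathlib

open MvPolynomial

/-- A real polynomial is a sum of squares (sos) if it equals a finite sum of squares
of real polynomials. -/
def IsSos {n : ℕ} (p : MvPolynomial (Fin n) ℝ) : Prop :=
  ∃ (k : ℕ) (g : Fin k → MvPolynomial (Fin n) ℝ), p = ∑ i, g i ^ 2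

/-- A real polynomial is positive semidefinite (psd) if it takes nonnegative values
at every real point. -/
def Psd {n : ℕ} (p : MvPolynomial (Fin n) ℝ) : Prop :=
  ∀ x : Fin n → ℝ, 0 ≤ eval x p

/-- The Choi–Lam form S(x,y,z) = x⁴y² + y⁴z² + z⁴x² − 3x²y²z². -/
noncomputable def ChoiLam : MvPolynomial (Fin 3) ℝ :=
  X 0 ^ 4 * X 1 ^ 2 + X 1 ^ 4 * X 2 ^ 2 + X 2 ^ 4 * X 0 ^ 2 - 3 * (X 0 ^ 2 * X 1 ^ 2 * X 2 ^ 2)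

lemma sos_identity (a b c u v : ℝ) (h1 : 2*b*u = c^2 - a^2 - b^2) (h2 : u^2 + v^2 = a^2) :
    (C (a ^ 2) * X 0 ^ 2 + C (b ^ 2) * X 1 ^ 2 + C (c ^ 2) * X 2 ^ 2) * ChoiLam =
      (C a * (X 0^3*X 1 - X 0*X 1*X 2^2))^2 + (C b*(X 1^3*X 2 - X 0^2*X 1*X 2))^2
      + (C c*(X 0*X 2^3 - X 0*X 1^2*X 2))^2
      + (C b*(X 0^2*X 1^2 - X 1^2*X 2^2) + C u*(X 0^2*X 2^2 - X 1^2*X 2^2))^2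
      + (C v*(X 0^2*X 2^2 - X 1^2*X 2^2))^2 := by
  apply MvPolynomial.funext
  intro w
  simp only [ChoiLam, map_add, map_sub, map_mul, map_pow, eval_C, eval_X, map_ofNat]
  set x := w 0
  set y := w 1
  set z := w 2
  linear_combination (-((x^2*y^2 - y^2*z^2)*(x^2*z^2 - y^2*z^2))) * h1 -
    ((x^2*z^2 - y^2*z^2)^2) * h2

lemma suff (a b c : ℝ)
    (h : 2 * (a ^ 2 * b ^ 2 + a ^ 2 * c ^ 2 + b ^ 2 * c ^ 2) ≥ a ^ 4 + b ^ 4 + c ^ 4) :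
    IsSos ((C (a ^ 2) * X 0 ^ 2 + C (b ^ 2) * X 1 ^ 2 + C (c ^ 2) * X 2 ^ 2) * ChoiLam) := by
  obtain ⟨u, v, h1, h2⟩ : ∃ u v : ℝ, 2*b*u = c^2 - a^2 - b^2 ∧ u^2 + v^2 = a^2 := by
    by_cases hb : b = 0
    · refine ⟨0, a, ?_, by ring⟩
      have hb2 : b^2 = 0 := by rw [hb]; ring
      have hb4 : b^4 = 0 := by rw [hb]; ring
      have hac : c^2 = a^2 := by nlinarith [sq_nonneg (a^2 - c^2), hb2, hb4]
      rw [hb]; linarith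
    · refine ⟨(c^2 - a^2 - b^2)/(2*b), Real.sqrt (2 * (a ^ 2 * b ^ 2 + a ^ 2 * c ^ 2 + b ^ 2 * c ^ 2) - (a ^ 4 + b ^ 4 + c ^ 4)) / (2*b), by field_simp, ?_⟩
      have hs : (Real.sqrt (2 * (a ^ 2 * b ^ 2 + a ^ 2 * c ^ 2 + b ^ 2 * c ^ 2) - (a ^ 4 + b ^ 4 + c ^ 4)))^2
          = 2 * (a ^ 2 * b ^ 2 + a ^ 2 * c ^ 2 + b ^ 2 * c ^ 2) - (a ^ 4 + b ^ 4 + c ^ 4) :=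
        Real.sq_sqrt (by linarith)
      generalize Real.sqrt (2 * (a ^ 2 * b ^ 2 + a ^ 2 * c ^ 2 + b ^ 2 * c ^ 2) - (a ^ 4 + b ^ 4 + c ^ 4)) = t at hs ⊢
      field_simp
      linear_combination hs
  refine ⟨5, ![C a * (X 0^3*X 1 - X 0*X 1*X 2^2), C b*(X 1^3*X 2 - X 0^2*X 1*X 2),
      C c*(X 0*X 2^3 - X 0*X 1^2*X 2),
      C b*(X 0^2*X 1^2 - X 1^2*X 2^2) + C u*(X 0^2*X 2^2 - X 1^2*X 2^2),
      C v*(X 0^2*X 2^2 - X 1^2*X 2^2)], ?_⟩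
  rw [Fin.sum_univ_five]
  simpa using sos_identity a b c u v h1 h2


lemma real_sumsq {k : ℕ} {f : Fin k → ℝ} (h : ∑ i, f i ^ 2 = 0) (i : Fin k) : f i = 0 := by
  have h0 : ∀ j ∈ Finset.univ, (0:ℝ) ≤ f j ^ 2 := fun j _ => sq_nonneg _
  have := (Finset.sum_eq_zero_iff_of_nonneg h0).mp h i (Finset.mem_univ i)
  exact pow_eq_zero_iff (two_ne_zero) |>.mp this

lemma mv_sumsq {k : ℕ} {h : Fin k → MvPolynomial (Fin 3) ℝ} (H : ∑ i, h i ^ 2 = 0)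
    (i : Fin k) : h i = 0 := by
  apply MvPolynomial.funext; intro w
  have h0 := congrArg (eval w) H
  simp only [map_sum, map_pow, map_zero] at h0
  simpa using real_sumsq h0 i

noncomputable def mk3 (a b c : ℕ) : Fin 3 →₀ ℕ :=
  Finsupp.single 0 a + Finsupp.single 1 b + Finsupp.single 2 c

lemma mk3_apply0 (a b c : ℕ) : mk3 a b c 0 = a := by
  simp [mk3, Finsupp.single_apply]
lemma mk3_apply1 (a b c : ℕ) : mk3 a b c 1 = b := by
  simp [mk3, Finsupp.single_apply]
lemma mk3_apply2 (a b c : ℕ) : mk3 a b c 2 = c := by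
  simp [mk3, Finsupp.single_apply]

lemma mk3_eq_mk3_iff {a b c a' b' c' : ℕ} :
    mk3 a b c = mk3 a' b' c' ↔ a = a' ∧ b = b' ∧ c = c' := by
  constructor
  · intro h
    refine ⟨?_, ?_, ?_⟩
    · have := DFunLike.congr_fun h 0; rwa [mk3_apply0, mk3_apply0] at this
    · have := DFunLike.congr_fun h 1; rwa [mk3_apply1, mk3_apply1] at this
    · have := DFunLike.congr_fun h 2; rwa [mk3_apply2, mk3_apply2] at this
  · rintro ⟨rfl, rfl, rfl⟩; rfl

lemma mk3_prod {M : Type*} [CommMonoid M] (a b c : ℕ) (v : Fin 3 → M) :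
    (mk3 a b c).prod (fun n e => v n ^ e) = v 0 ^ a * v 1 ^ b * v 2 ^ c := by
  rw [Finsupp.prod_fintype _ _ (fun i => pow_zero _), Fin.prod_univ_three,
    mk3_apply0, mk3_apply1, mk3_apply2]

noncomputable def σ3 : MvPolynomial (Fin 3) ℝ →ₐ[ℝ] Polynomial (MvPolynomial (Fin 3) ℝ) :=
  aeval (fun i => Polynomial.C (X i) * Polynomial.X)

lemma sigma_monomial (s : Fin 3 →₀ ℕ) (r : ℝ) :
    σ3 (monomial s r) = Polynomial.C (monomial s r) * Polynomial.X ^ (s 0 + s 1 + s 2) := by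
  rw [σ3, aeval_monomial]
  rw [Finsupp.prod_fintype _ _ (fun i => pow_zero _), Fin.prod_univ_three]
  rw [monomial_eq, Finsupp.prod_fintype _ _ (fun i => pow_zero _), Fin.prod_univ_three]
  have h : (algebraMap ℝ (Polynomial (MvPolynomial (Fin 3) ℝ))) r = Polynomial.C (C r) := by
    rw [Polynomial.algebraMap_apply]; norm_cast
  rw [h]
  simp only [mul_pow, map_mul, map_pow]
  ring

lemma sigma_coeff_supp (g : MvPolynomial (Fin 3) ℝ) (d : ℕ) (s : Fin 3 →₀ ℕ)
    (hne : s 0 + s 1 + s 2 ≠ d) : coeff s ((σ3 g).coeff d) = 0 := by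
  induction g using MvPolynomial.induction_on' with
  | monomial u r =>
    rw [sigma_monomial]
    rw [Polynomial.coeff_C_mul, Polynomial.coeff_X_pow]
    by_cases hu : d = u 0 + u 1 + u 2
    · rw [if_pos hu, mul_one, coeff_monomial, if_neg]
      intro h; apply hne; rw [← h]; omega
    · rw [if_neg hu, mul_zero, coeff_zero]
  | add p q hp hq =>
    rw [map_add, Polynomial.coeff_add, coeff_add, hp, hq, add_zero]


lemma rep_lemma (F : MvPolynomial (Fin 3) ℝ)
    (hs : ∀ s : Fin 3 →₀ ℕ, s 0 + s 1 + s 2 ≠ 4 → coeff s F = 0) :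
    F = monomial (mk3 4 0 0) (coeff (mk3 4 0 0) F) + monomial (mk3 0 4 0) (coeff (mk3 0 4 0) F) + monomial (mk3 0 0 4) (coeff (mk3 0 0 4) F) + monomial (mk3 3 1 0) (coeff (mk3 3 1 0) F) + monomial (mk3 3 0 1) (coeff (mk3 3 0 1) F) + monomial (mk3 1 3 0) (coeff (mk3 1 3 0) F) + monomial (mk3 0 3 1) (coeff (mk3 0 3 1) F) + monomial (mk3 1 0 3) (coeff (mk3 1 0 3) F) + monomial (mk3 0 1 3) (coeff (mk3 0 1 3) F) + monomial (mk3 2 2 0) (coeff (mk3 2 2 0) F) + monomial (mk3 2 0 2) (coeff (mk3 2 0 2) F) + monomial (mk3 0 2 2) (coeff (mk3 0 2 2) F) + monomial (mk3 2 1 1) (coeff (mk3 2 1 1) F) + monomial (mk3 1 2 1) (coeff (mk3 1 2 1) F) + monomial (mk3 1 1 2) (coeff (mk3 1 1 2) F) := by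
  apply MvPolynomial.ext
  intro s
  simp only [coeff_add, coeff_monomial]
  by_cases hS : s 0 + s 1 + s 2 = 4
  · have hs3 : mk3 (s 0) (s 1) (s 2) = s := by
      ext j; fin_cases j <;> simp [mk3, Finsupp.single_apply]
    suffices h : ∀ A B C : ℕ, A + B + C = 4 →
        coeff (mk3 A B C) F = (if mk3 4 0 0 = mk3 A B C then coeff (mk3 4 0 0) F else 0) + (if mk3 0 4 0 = mk3 A B C then coeff (mk3 0 4 0) F else 0) + (if mk3 0 0 4 = mk3 A B C then coeff (mk3 0 0 4) F else 0) + (if mk3 3 1 0 = mk3 A B C then coeff (mk3 3 1 0) F else 0) + (if mk3 3 0 1 = mk3 A B C then coeff (mk3 3 0 1) F else 0) + (if mk3 1 3 0 = mk3 A B C then coeff (mk3 1 3 0) F else 0) + (if mk3 0 3 1 = mk3 A B C then coeff (mk3 0 3 1) F else 0) + (if mk3 1 0 3 = mk3 A B C then coeff (mk3 1 0 3) F else 0) + (if mk3 0 1 3 = mk3 A B C then coeff (mk3 0 1 3) F else 0) + (if mk3 2 2 0 = mk3 A B C then coeff (mk3 2 2 0) F else 0) + (if mk3 2 0 2 = mk3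 A B C then coeff (mk3 2 0 2) F else 0) + (if mk3 0 2 2 = mk3 A B C then coeff (mk3 0 2 2) F else 0) + (if mk3 2 1 1 = mk3 A B C then coeff (mk3 2 1 1) F else 0) + (if mk3 1 2 1 = mk3 A B C then coeff (mk3 1 2 1) F else 0) + (if mk3 1 1 2 = mk3 A B C then coeff (mk3 1 1 2) F else 0) by
      have hx := h (s 0) (s 1) (s 2) hS
      rwa [hs3] at hx
    intro A B C hABC
    have hA : A ≤ 4 := by omega
    have hB : B ≤ 4 := by omega
    have hC : C ≤ 4 := by omega
    interval_cases A <;> interval_cases B <;> interval_cases C <;>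
      first
      | omega
      | simp [mk3_eq_mk3_iff]
  · rw [hs s hS]
    have hne : ∀ (A B C : ℕ), A + B + C = 4 → ¬(mk3 A B C = s) := by
      intro A B C h4 he
      apply hS
      rw [← he, mk3_apply0, mk3_apply1, mk3_apply2]
      exact h4
    have hne0 : ¬(mk3 4 0 0 = s) := hne 4 0 0 (by norm_num)
    have hne1 : ¬(mk3 0 4 0 = s) := hne 0 4 0 (by norm_num)
    have hne2 : ¬(mk3 0 0 4 = s) := hne 0 0 4 (by norm_num)
    have hne3 : ¬(mk3 3 1 0 = s) := hne 3 1 0 (by norm_num)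
    have hne4 : ¬(mk3 3 0 1 = s) := hne 3 0 1 (by norm_num)
    have hne5 : ¬(mk3 1 3 0 = s) := hne 1 3 0 (by norm_num)
    have hne6 : ¬(mk3 0 3 1 = s) := hne 0 3 1 (by norm_num)
    have hne7 : ¬(mk3 1 0 3 = s) := hne 1 0 3 (by norm_num)
    have hne8 : ¬(mk3 0 1 3 = s) := hne 0 1 3 (by norm_num)
    have hne9 : ¬(mk3 2 2 0 = s) := hne 2 2 0 (by norm_num)
    have hne10 : ¬(mk3 2 0 2 = s) := hne 2 0 2 (by norm_num)
    have hne11 : ¬(mk3 0 2 2 = s) := hne 0 2 2 (by norm_num)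
    have hne12 : ¬(mk3 2 1 1 = s) := hne 2 1 1 (by norm_num)
    have hne13 : ¬(mk3 1 2 1 = s) := hne 1 2 1 (by norm_num)
    have hne14 : ¬(mk3 1 1 2 = s) := hne 1 1 2 (by norm_num)
    simp [hne0, hne1, hne2, hne3, hne4, hne5, hne6, hne7, hne8, hne9, hne10, hne11, hne12, hne13, hne14]

lemma evalF_lemma (F : MvPolynomial (Fin 3) ℝ)
    (hs : ∀ s : Fin 3 →₀ ℕ, s 0 + s 1 + s 2 ≠ 4 → coeff s F = 0) (x y z : ℝ) :
    eval ![x,y,z] F = coeff (mk3 4 0 0) F * (x^4) + coeff (mk3 0 4 0) F * (y^4) + coeff (mk3 0 0 4) F * (z^4) + coeff (mk3 3 1 0) F * (x^3*y) + coeff (mk3 3 0 1) F * (x^3*z) + coeff (mk3 1 3 0) F * (x*y^3) + coeff (mk3 0 3 1) F * (y^3*z) + coeff (mk3 1 0 3) F * (x*z^3) + coeff (mk3 0 1 3) F * (y*z^3) + coeff (mk3 2 2 0) F * (x^2*y^2) + coeff (mk3 2 0 2) F * (x^2*z^2) + coeff (mk3 0 2 2) F * (y^2*z^2) + coeff (mk3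 2 1 1) F * (x^2*y*z) + coeff (mk3 1 2 1) F * (x*y^2*z) + coeff (mk3 1 1 2) F * (x*y*z^2) := by
  conv_lhs => rw [rep_lemma F hs]
  simp only [map_add, eval_monomial, mk3_prod, Matrix.cons_val_zero, Matrix.cons_val_one,
    Matrix.head_cons, Matrix.cons_val_two, Matrix.tail_cons]
  ring

set_option maxHeartbeats 2000000 in
lemma necessity (a b c : ℝ)
    (hsos : ∃ (k : ℕ) (g : Fin k → MvPolynomial (Fin 3) ℝ),
      (C (a ^ 2) * X 0 ^ 2 + C (b ^ 2) * X 1 ^ 2 + C (c ^ 2) * X 2 ^ 2) * ChoiLam = ∑ i, g i ^ 2) :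
    2 * (a ^ 2 * b ^ 2 + a ^ 2 * c ^ 2 + b ^ 2 * c ^ 2) ≥ a ^ 4 + b ^ 4 + c ^ 4 := by
  obtain ⟨k, g, hg⟩ := hsos
  set u : Fin k → Polynomial (MvPolynomial (Fin 3) ℝ) := fun i => σ3 (g i) with hu_def
  have hσP : σ3 ((C (a ^ 2) * X 0 ^ 2 + C (b ^ 2) * X 1 ^ 2 + C (c ^ 2) * X 2 ^ 2) * ChoiLam)
      = Polynomial.C ((C (a ^ 2) * X 0 ^ 2 + C (b ^ 2) * X 1 ^ 2 + C (c ^ 2) * X 2 ^ 2) * ChoiLam)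
        * Polynomial.X ^ 8 := by
    have hC : ∀ r : ℝ, σ3 (C r) = Polynomial.C (C r) := by
      intro r
      rw [σ3, aeval_C, Polynomial.algebraMap_apply]; norm_cast
    have hX : ∀ j : Fin 3, σ3 (X j) = Polynomial.C (X j) * Polynomial.X := fun j => aeval_X _ j
    simp only [ChoiLam, map_add, map_sub, map_mul, map_pow, map_ofNat, hC, hX]
    ring
  have hu8 : ∑ i, (u i)^2
      = Polynomial.C ((C (a ^ 2) * X 0 ^ 2 + C (b ^ 2) * X 1 ^ 2 + C (c ^ 2) * X 2 ^ 2) * ChoiLam)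
        * Polynomial.X ^ 8 := by
    have h0 := congrArg σ3 hg
    rw [hσP, map_sum,
      Finset.sum_congr rfl (fun i (_ : i ∈ Finset.univ) => map_pow σ3 (g i) 2)] at h0
    exact h0.symm
  have key_high : ∀ (m d : ℕ), 4 < d →
      (Finset.univ.sup fun i => (u i).natDegree) < d + m → ∀ i, (u i).coeff d = 0 := by
    intro m
    induction m with
    | zero =>
      intro d _ hN i
      refine Polynomial.coeff_eq_zero_of_natDegree_lt
        (lt_of_le_of_lt (Finset.le_sup (f := fun i => (u i).natDegree) (Finset.mem_univ i)) ?_)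
      simpa using hN
    | succ m ih =>
      intro d hd hN i
      have hzero : ∑ j, ((u j).coeff d)^2 = 0 := by
        have hc := congrArg (fun p => Polynomial.coeff p (d + d)) hu8
        simp only [Polynomial.finset_sum_coeff] at hc
        have hterm : ∀ j : Fin k, ((u j)^2).coeff (d+d) = ((u j).coeff d)^2 := by
          intro j
          rw [sq, Polynomial.coeff_mul, Finset.sum_eq_single ((d : ℕ), d)]
          · rw [sq]
          · rintro ⟨e1, e2⟩ hmem hne
            rw [Finset.HasAntidiagonal.mem_antidiagonal] at hmem
            have hne' : e1 ≠ d ∨ e2 ≠ d := by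
              by_contra hcon
              push_neg at hcon
              exact hne (by rw [hcon.1, hcon.2])
            rcases Nat.lt_or_ge d e1 with h1 | h1
            · rw [ih e1 (by omega) (by omega) j, zero_mul]
            · have h2 : d < e2 := by omega
              rw [ih e2 (by omega) (by omega) j, mul_zero]
          · intro hnot
            exact absurd (Finset.HasAntidiagonal.mem_antidiagonal.mpr (by omega)) hnot
        simp only [hterm] at hc
        rw [Polynomial.coeff_C_mul, Polynomial.coeff_X_pow, if_neg (by omega), mul_zero] at hc
        exact hc
      exact mv_sumsq hzero i
  have hi : ∀ d, 4 < d → ∀ i, (u i).coeff d = 0 := fun d hd =>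
    key_high ((Finset.univ.sup fun i => (u i).natDegree) + 1) d hd (by omega)
  have hlo : ∀ d, d < 4 → ∀ i, (u i).coeff d = 0 := by
    intro d
    induction d using Nat.strong_induction_on with
    | _ d ih =>
      intro hd i
      have hzero : ∑ j, ((u j).coeff d)^2 = 0 := by
        have hc := congrArg (fun p => Polynomial.coeff p (d + d)) hu8
        simp only [Polynomial.finset_sum_coeff] at hc
        have hterm : ∀ j : Fin k, ((u j)^2).coeff (d+d) = ((u j).coeff d)^2 := by
          intro j
          rw [sq, Polynomial.coeff_mul, Finset.sum_eq_single ((d : ℕ), d)]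
          · rw [sq]
          · rintro ⟨e1, e2⟩ hmem hne
            rw [Finset.HasAntidiagonal.mem_antidiagonal] at hmem
            have hne' : e1 ≠ d ∨ e2 ≠ d := by
              by_contra hcon
              push_neg at hcon
              exact hne (by rw [hcon.1, hcon.2])
            rcases Nat.lt_or_ge e1 d with h1 | h1
            · rw [ih e1 h1 (by omega) j, zero_mul]
            · have h2 : e2 < d := by omega
              rw [ih e2 h2 (by omega) j, mul_zero]
          · intro hnot
            exact absurd (Finset.HasAntidiagonal.mem_antidiagonal.mpr (by omega)) hnot
        simp only [hterm] at hc
        rw [Polynomial.coeff_C_mul, Polynomial.coeff_X_pow, if_neg (by omega), mul_zero] at hc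
        exact hc
      exact mv_sumsq hzero i
  set f : Fin k → MvPolynomial (Fin 3) ℝ := fun i => (u i).coeff 4 with hf_def
  have hfP : ∑ i, (f i)^2
      = (C (a ^ 2) * X 0 ^ 2 + C (b ^ 2) * X 1 ^ 2 + C (c ^ 2) * X 2 ^ 2) * ChoiLam := by
    have hc := congrArg (fun p => Polynomial.coeff p 8) hu8
    simp only [Polynomial.finset_sum_coeff] at hc
    have hterm : ∀ j : Fin k, ((u j)^2).coeff 8 = (f j)^2 := by
      intro j
      rw [sq, Polynomial.coeff_mul, Finset.sum_eq_single ((4 : ℕ), 4)]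
      · rw [sq]
      · rintro ⟨e1, e2⟩ hmem hne
        rw [Finset.HasAntidiagonal.mem_antidiagonal] at hmem
        have hne' : e1 ≠ 4 ∨ e2 ≠ 4 := by
          by_contra hcon
          push_neg at hcon
          exact hne (by rw [hcon.1, hcon.2])
        rcases Nat.lt_or_ge e1 4 with h1 | h1
        · rw [hlo e1 h1 j, zero_mul]
        · rcases Nat.lt_or_ge 4 e1 with h2 | h2
          · rw [hi e1 h2 j, zero_mul]
          · have he1 : e1 = 4 := by omega
            have he2 : e2 ≠ 4 := by omega
            rcases Nat.lt_or_ge e2 4 with h3 | h3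
            · rw [hlo e2 h3 j, mul_zero]
            · rw [hi e2 (by omega) j, mul_zero]
      · intro hnot
        exact absurd (Finset.HasAntidiagonal.mem_antidiagonal.mpr (by omega)) hnot
    simp only [hterm] at hc
    rw [Polynomial.coeff_C_mul, Polynomial.coeff_X_pow, if_pos rfl, mul_one] at hc
    exact hc
  have hsupp : ∀ (i : Fin k) (s : Fin 3 →₀ ℕ), s 0 + s 1 + s 2 ≠ 4 → coeff s (f i) = 0 :=
    fun i s hs => sigma_coeff_supp (g i) 4 s hs
  have hevalF : ∀ (x y z : ℝ) (i : Fin k), eval ![x,y,z] (f i) = coeff (mk3 4 0 0) (f i) * (x^4) + coeff (mk3 0 4 0) (f i) * (y^4) + coeff (mk3 0 0 4) (f i) * (z^4) + coeff (mk3 3 1 0) (f i) * (x^3*y) + coeff (mk3 3 0 1) (f i) * (x^3*z) + coeff (mk3 1 3 0) (f i) * (x*y^3) + coeff (mk3 0 3 1) (f i) * (y^3*z) + coeff (mk3 1 0 3) (f i) * (x*z^3) + coeff (mk3 0 1 3) (f i) * (y*z^3) + coeff (mk3 2 2 0) (f i) * (x^2*y^2) + coeff (mk3 2 0 2) (f i)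 * (x^2*z^2) + coeff (mk3 0 2 2) (f i) * (y^2*z^2) + coeff (mk3 2 1 1) (f i) * (x^2*y*z) + coeff (mk3 1 2 1) (f i) * (x*y^2*z) + coeff (mk3 1 1 2) (f i) * (x*y*z^2) :=
    fun x y z i => evalF_lemma (f i) (hsupp i) x y z
  have hE : ∀ x y z : ℝ, (∑ i, (eval ![x,y,z] (f i))^2)
      = (a^2*x^2 + b^2*y^2 + c^2*z^2) * (x^4*y^2 + y^4*z^2 + z^4*x^2 - 3*(x^2*y^2*z^2)) := by
    intro x y z
    have h0 := congrArg (eval ![x,y,z]) hfP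
    rw [map_sum, Finset.sum_congr rfl
      (fun i (_ : i ∈ Finset.univ) => map_pow (eval ![x,y,z]) (f i) 2)] at h0
    rw [h0]
    simp only [ChoiLam, map_add, map_sub, map_mul, map_pow, map_ofNat, eval_C, eval_X,
      Matrix.cons_val_zero, Matrix.cons_val_one, Matrix.head_cons, Matrix.cons_val_two,
      Matrix.tail_cons]
  have keyA1 : ∀ i, (coeff (mk3 4 0 0) (f i))^2 = (1 : ℝ) * (eval ![(1 : ℝ), (0 : ℝ), (0 : ℝ)] (f i))^2 := by
    intro i
    simp only [hevalF]
    ring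
  have hA1 : ∑ i, ((coeff (mk3 4 0 0) (f i))^2) = (0:ℝ) := by
    calc ∑ i, ((coeff (mk3 4 0 0) (f i))^2) = ∑ i, ((1 : ℝ) * (eval ![(1 : ℝ), (0 : ℝ), (0 : ℝ)] (f i))^2) := Finset.sum_congr rfl (fun i _ => keyA1 i)
      _ = (1 : ℝ) * (∑ i, (eval ![(1 : ℝ), (0 : ℝ), (0 : ℝ)] (f i))^2) := by
          simp only [Finset.sum_add_distrib, ← Finset.mul_sum]
      _ = (0:ℝ) := by rw [hE (1 : ℝ) (0 : ℝ) (0 : ℝ)]; ring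
  have hdn400 : ∀ i, coeff (mk3 4 0 0) (f i) = 0 := fun i => real_sumsq hA1 i
  have keyA2 : ∀ i, (coeff (mk3 0 4 0) (f i))^2 = (1 : ℝ) * (eval ![(0 : ℝ), (1 : ℝ), (0 : ℝ)] (f i))^2 := by
    intro i
    simp only [hevalF]
    ring
  have hA2 : ∑ i, ((coeff (mk3 0 4 0) (f i))^2) = (0:ℝ) := by
    calc ∑ i, ((coeff (mk3 0 4 0) (f i))^2) = ∑ i, ((1 : ℝ) * (eval ![(0 : ℝ), (1 : ℝ), (0 : ℝ)] (f i))^2) := Finset.sum_congr rfl (fun i _ => keyA2 i)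
      _ = (1 : ℝ) * (∑ i, (eval ![(0 : ℝ), (1 : ℝ), (0 : ℝ)] (f i))^2) := by
          simp only [Finset.sum_add_distrib, ← Finset.mul_sum]
      _ = (0:ℝ) := by rw [hE (0 : ℝ) (1 : ℝ) (0 : ℝ)]; ring
  have hdn040 : ∀ i, coeff (mk3 0 4 0) (f i) = 0 := fun i => real_sumsq hA2 i
  have keyA3 : ∀ i, (coeff (mk3 0 0 4) (f i))^2 = (1 : ℝ) * (eval ![(0 : ℝ), (0 : ℝ), (1 : ℝ)] (f i))^2 := by
    intro i
    simp only [hevalF]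
    ring
  have hA3 : ∑ i, ((coeff (mk3 0 0 4) (f i))^2) = (0:ℝ) := by
    calc ∑ i, ((coeff (mk3 0 0 4) (f i))^2) = ∑ i, ((1 : ℝ) * (eval ![(0 : ℝ), (0 : ℝ), (1 : ℝ)] (f i))^2) := Finset.sum_congr rfl (fun i _ => keyA3 i)
      _ = (1 : ℝ) * (∑ i, (eval ![(0 : ℝ), (0 : ℝ), (1 : ℝ)] (f i))^2) := by
          simp only [Finset.sum_add_distrib, ← Finset.mul_sum]
      _ = (0:ℝ) := by rw [hE (0 : ℝ) (0 : ℝ) (1 : ℝ)]; ring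
  have hdn004 : ∀ i, coeff (mk3 0 0 4) (f i) = 0 := fun i => real_sumsq hA3 i
  have keyB1 : ∀ i, (coeff (mk3 1 3 0) (f i))^2 = (1 : ℝ) * (eval ![(1 : ℝ), (1 : ℝ), (0 : ℝ)] (f i))^2 + (1/2 : ℝ) * (eval ![((-1) : ℝ), (1 : ℝ), (0 : ℝ)] (f i))^2 + (-(1/8) : ℝ) * (eval ![(2 : ℝ), (1 : ℝ), (0 : ℝ)] (f i))^2 + (-(1/40) : ℝ) * (eval ![((-2) : ℝ), (1 : ℝ), (0 : ℝ)] (f i))^2 + (1/90 : ℝ) * (eval ![(3 : ℝ), (1 : ℝ), (0 : ℝ)] (f i))^2 := by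
    intro i
    simp only [hevalF]
    simp only [hdn400, hdn040, hdn004]
    ring
  have hB1 : ∑ i, ((coeff (mk3 1 3 0) (f i))^2) = (0:ℝ) := by
    calc ∑ i, ((coeff (mk3 1 3 0) (f i))^2) = ∑ i, ((1 : ℝ) * (eval ![(1 : ℝ), (1 : ℝ), (0 : ℝ)] (f i))^2 + (1/2 : ℝ) * (eval ![((-1) : ℝ), (1 : ℝ), (0 : ℝ)] (f i))^2 + (-(1/8) : ℝ) * (eval ![(2 : ℝ), (1 : ℝ), (0 : ℝ)] (f i))^2 + (-(1/40) : ℝ) * (eval ![((-2) : ℝ), (1 : ℝ), (0 : ℝ)] (f i))^2 + (1/90 : ℝ) * (eval ![(3 : ℝ), (1 : ℝ), (0 : ℝ)] (f i))^2) := Finset.sum_congr rfl (fun i _ => keyB1 i)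
      _ = (1 : ℝ) * (∑ i, (eval ![(1 : ℝ), (1 : ℝ), (0 : ℝ)] (f i))^2) + (1/2 : ℝ) * (∑ i, (eval ![((-1) : ℝ), (1 : ℝ), (0 : ℝ)] (f i))^2) + (-(1/8) : ℝ) * (∑ i, (eval ![(2 : ℝ), (1 : ℝ), (0 : ℝ)] (f i))^2) + (-(1/40) : ℝ) * (∑ i, (eval ![((-2) : ℝ), (1 : ℝ), (0 : ℝ)] (f i))^2) + (1/90 : ℝ) * (∑ i, (eval ![(3 : ℝ), (1 : ℝ), (0 : ℝ)] (f i))^2) := by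
          simp only [Finset.sum_add_distrib, ← Finset.mul_sum]
      _ = (0:ℝ) := by rw [hE (1 : ℝ) (1 : ℝ) (0 : ℝ), hE ((-1) : ℝ) (1 : ℝ) (0 : ℝ), hE (2 : ℝ) (1 : ℝ) (0 : ℝ), hE ((-2) : ℝ) (1 : ℝ) (0 : ℝ), hE (3 : ℝ) (1 : ℝ) (0 : ℝ)]; ring
  have hdn130 : ∀ i, coeff (mk3 1 3 0) (f i) = 0 := fun i => real_sumsq hB1 i
  have keyB2 : ∀ i, (coeff (mk3 3 0 1) (f i))^2 = (1/12 : ℝ) * (eval ![(1 : ℝ), (0 : ℝ), (1 : ℝ)] (f i))^2 + (-(1/24) : ℝ) * (eval ![((-1) : ℝ), (0 : ℝ), (1 : ℝ)] (f i))^2 + (-(1/48) : ℝ) * (eval ![(2 : ℝ), (0 : ℝ), (1 : ℝ)] (f i))^2 + (1/240 : ℝ) * (eval ![((-2) : ℝ), (0 : ℝ), (1 : ℝ)] (f i))^2 + (1/360 : ℝ) * (eval ![(3 : ℝ), (0 : ℝ), (1 : ℝ)] (f i))^2 := by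
    intro i
    simp only [hevalF]
    simp only [hdn400, hdn040, hdn004]
    ring
  have hB2 : ∑ i, ((coeff (mk3 3 0 1) (f i))^2) = (0:ℝ) := by
    calc ∑ i, ((coeff (mk3 3 0 1) (f i))^2) = ∑ i, ((1/12 : ℝ) * (eval ![(1 : ℝ), (0 : ℝ), (1 : ℝ)] (f i))^2 + (-(1/24) : ℝ) * (eval ![((-1) : ℝ), (0 : ℝ), (1 : ℝ)] (f i))^2 + (-(1/48) : ℝ) * (eval ![(2 : ℝ), (0 : ℝ), (1 : ℝ)] (f i))^2 + (1/240 : ℝ) * (eval ![((-2) : ℝ), (0 : ℝ), (1 : ℝ)] (f i))^2 + (1/360 : ℝ) * (eval ![(3 : ℝ), (0 : ℝ), (1 : ℝ)] (f i))^2) := Finset.sum_congr rfl (fun i _ => keyB2 i)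
      _ = (1/12 : ℝ) * (∑ i, (eval ![(1 : ℝ), (0 : ℝ), (1 : ℝ)] (f i))^2) + (-(1/24) : ℝ) * (∑ i, (eval ![((-1) : ℝ), (0 : ℝ), (1 : ℝ)] (f i))^2) + (-(1/48) : ℝ) * (∑ i, (eval ![(2 : ℝ), (0 : ℝ), (1 : ℝ)] (f i))^2) + (1/240 : ℝ) * (∑ i, (eval ![((-2) : ℝ), (0 : ℝ), (1 : ℝ)] (f i))^2) + (1/360 : ℝ) * (∑ i, (eval ![(3 : ℝ), (0 : ℝ), (1 : ℝ)] (f i))^2) := by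
          simp only [Finset.sum_add_distrib, ← Finset.mul_sum]
      _ = (0:ℝ) := by rw [hE (1 : ℝ) (0 : ℝ) (1 : ℝ), hE ((-1) : ℝ) (0 : ℝ) (1 : ℝ), hE (2 : ℝ) (0 : ℝ) (1 : ℝ), hE ((-2) : ℝ) (0 : ℝ) (1 : ℝ), hE (3 : ℝ) (0 : ℝ) (1 : ℝ)]; ring
  have hdn301 : ∀ i, coeff (mk3 3 0 1) (f i) = 0 := fun i => real_sumsq hB2 i
  have keyB3 : ∀ i, (coeff (mk3 0 1 3) (f i))^2 = (1 : ℝ) * (eval ![(0 : ℝ), (1 : ℝ), (1 : ℝ)] (f i))^2 + (1/2 : ℝ) * (eval ![(0 : ℝ), ((-1) : ℝ), (1 : ℝ)] (f i))^2 + (-(1/8) : ℝ) * (eval ![(0 : ℝ), (2 : ℝ), (1 : ℝ)] (f i))^2 + (-(1/40) : ℝ) * (eval ![(0 : ℝ), ((-2) : ℝ), (1 : ℝ)] (f i))^2 + (1/90 : ℝ) * (eval ![(0 : ℝ), (3 : ℝ), (1 : ℝ)] (f i))^2 := by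
    intro i
    simp only [hevalF]
    simp only [hdn400, hdn040, hdn004]
    ring
  have hB3 : ∑ i, ((coeff (mk3 0 1 3) (f i))^2) = (0:ℝ) := by
    calc ∑ i, ((coeff (mk3 0 1 3) (f i))^2) = ∑ i, ((1 : ℝ) * (eval ![(0 : ℝ), (1 : ℝ), (1 : ℝ)] (f i))^2 + (1/2 : ℝ) * (eval ![(0 : ℝ), ((-1) : ℝ), (1 : ℝ)] (f i))^2 + (-(1/8) : ℝ) * (eval ![(0 : ℝ), (2 : ℝ), (1 : ℝ)] (f i))^2 + (-(1/40) : ℝ) * (eval ![(0 : ℝ), ((-2) : ℝ), (1 : ℝ)] (f i))^2 + (1/90 : ℝ) * (eval ![(0 : ℝ), (3 : ℝ), (1 : ℝ)] (f i))^2) := Finset.sum_congr rfl (fun i _ => keyB3 i)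
      _ = (1 : ℝ) * (∑ i, (eval ![(0 : ℝ), (1 : ℝ), (1 : ℝ)] (f i))^2) + (1/2 : ℝ) * (∑ i, (eval ![(0 : ℝ), ((-1) : ℝ), (1 : ℝ)] (f i))^2) + (-(1/8) : ℝ) * (∑ i, (eval ![(0 : ℝ), (2 : ℝ), (1 : ℝ)] (f i))^2) + (-(1/40) : ℝ) * (∑ i, (eval ![(0 : ℝ), ((-2) : ℝ), (1 : ℝ)] (f i))^2) + (1/90 : ℝ) * (∑ i, (eval ![(0 : ℝ), (3 : ℝ), (1 : ℝ)] (f i))^2) := by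
          simp only [Finset.sum_add_distrib, ← Finset.mul_sum]
      _ = (0:ℝ) := by rw [hE (0 : ℝ) (1 : ℝ) (1 : ℝ), hE (0 : ℝ) ((-1) : ℝ) (1 : ℝ), hE (0 : ℝ) (2 : ℝ) (1 : ℝ), hE (0 : ℝ) ((-2) : ℝ) (1 : ℝ), hE (0 : ℝ) (3 : ℝ) (1 : ℝ)]; ring
  have hdn013 : ∀ i, coeff (mk3 0 1 3) (f i) = 0 := fun i => real_sumsq hB3 i
  have keyP2 : ∀ i, (coeff (mk3 3 1 0) (f i))^2 = (-(1/2) : ℝ) * (eval ![(1 : ℝ), (1 : ℝ), (0 : ℝ)] (f i))^2 + (1/6 : ℝ) * (eval ![((-1) : ℝ), (1 : ℝ), (0 : ℝ)] (f i))^2 + (1/48 : ℝ) * (eval ![(2 : ℝ), (1 : ℝ), (0 : ℝ)] (f i))^2 := by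
    intro i
    simp only [hevalF]
    simp only [hdn400, hdn040, hdn004, hdn130, hdn301, hdn013]
    ring
  have hP2 : ∑ i, ((coeff (mk3 3 1 0) (f i))^2) = a^2 := by
    calc ∑ i, ((coeff (mk3 3 1 0) (f i))^2) = ∑ i, ((-(1/2) : ℝ) * (eval ![(1 : ℝ), (1 : ℝ), (0 : ℝ)] (f i))^2 + (1/6 : ℝ) * (eval ![((-1) : ℝ), (1 : ℝ), (0 : ℝ)] (f i))^2 + (1/48 : ℝ) * (eval ![(2 : ℝ), (1 : ℝ), (0 : ℝ)] (f i))^2) := Finset.sum_congr rfl (fun i _ => keyP2 i)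
      _ = (-(1/2) : ℝ) * (∑ i, (eval ![(1 : ℝ), (1 : ℝ), (0 : ℝ)] (f i))^2) + (1/6 : ℝ) * (∑ i, (eval ![((-1) : ℝ), (1 : ℝ), (0 : ℝ)] (f i))^2) + (1/48 : ℝ) * (∑ i, (eval ![(2 : ℝ), (1 : ℝ), (0 : ℝ)] (f i))^2) := by
          simp only [Finset.sum_add_distrib, ← Finset.mul_sum]
      _ = a^2 := by rw [hE (1 : ℝ) (1 : ℝ) (0 : ℝ), hE ((-1) : ℝ) (1 : ℝ) (0 : ℝ), hE (2 : ℝ) (1 : ℝ) (0 : ℝ)]; ring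
  have keyD2 : ∀ i, (coeff (mk3 2 2 0) (f i))^2 = (1 : ℝ) * (eval ![(1 : ℝ), (1 : ℝ), (0 : ℝ)] (f i))^2 + (1/3 : ℝ) * (eval ![((-1) : ℝ), (1 : ℝ), (0 : ℝ)] (f i))^2 + (-(1/48) : ℝ) * (eval ![(2 : ℝ), (1 : ℝ), (0 : ℝ)] (f i))^2 := by
    intro i
    simp only [hevalF]
    simp only [hdn400, hdn040, hdn004, hdn130, hdn301, hdn013]
    ring
  have hD2 : ∑ i, ((coeff (mk3 2 2 0) (f i))^2) = b^2 := by
    calc ∑ i, ((coeff (mk3 2 2 0) (f i))^2) = ∑ i, ((1 : ℝ) * (eval ![(1 : ℝ), (1 : ℝ), (0 : ℝ)] (f i))^2 + (1/3 : ℝ) * (eval ![((-1) : ℝ), (1 : ℝ), (0 : ℝ)] (f i))^2 + (-(1/48) : ℝ) * (eval ![(2 : ℝ), (1 : ℝ), (0 : ℝ)] (f i))^2) := Finset.sum_congr rfl (fun i _ => keyD2 i)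
      _ = (1 : ℝ) * (∑ i, (eval ![(1 : ℝ), (1 : ℝ), (0 : ℝ)] (f i))^2) + (1/3 : ℝ) * (∑ i, (eval ![((-1) : ℝ), (1 : ℝ), (0 : ℝ)] (f i))^2) + (-(1/48) : ℝ) * (∑ i, (eval ![(2 : ℝ), (1 : ℝ), (0 : ℝ)] (f i))^2) := by
          simp only [Finset.sum_add_distrib, ← Finset.mul_sum]
      _ = b^2 := by rw [hE (1 : ℝ) (1 : ℝ) (0 : ℝ), hE ((-1) : ℝ) (1 : ℝ) (0 : ℝ), hE (2 : ℝ) (1 : ℝ) (0 : ℝ)]; ring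
  have keyE2 : ∀ i, (coeff (mk3 2 0 2) (f i))^2 = (-(1/2) : ℝ) * (eval ![(1 : ℝ), (0 : ℝ), (1 : ℝ)] (f i))^2 + (1/6 : ℝ) * (eval ![((-1) : ℝ), (0 : ℝ), (1 : ℝ)] (f i))^2 + (1/12 : ℝ) * (eval ![(2 : ℝ), (0 : ℝ), (1 : ℝ)] (f i))^2 := by
    intro i
    simp only [hevalF]
    simp only [hdn400, hdn040, hdn004, hdn130, hdn301, hdn013]
    ring
  have hE2 : ∑ i, ((coeff (mk3 2 0 2) (f i))^2) = a^2 := by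
    calc ∑ i, ((coeff (mk3 2 0 2) (f i))^2) = ∑ i, ((-(1/2) : ℝ) * (eval ![(1 : ℝ), (0 : ℝ), (1 : ℝ)] (f i))^2 + (1/6 : ℝ) * (eval ![((-1) : ℝ), (0 : ℝ), (1 : ℝ)] (f i))^2 + (1/12 : ℝ) * (eval ![(2 : ℝ), (0 : ℝ), (1 : ℝ)] (f i))^2) := Finset.sum_congr rfl (fun i _ => keyE2 i)
      _ = (-(1/2) : ℝ) * (∑ i, (eval ![(1 : ℝ), (0 : ℝ), (1 : ℝ)] (f i))^2) + (1/6 : ℝ) * (∑ i, (eval ![((-1) : ℝ), (0 : ℝ), (1 : ℝ)] (f i))^2) + (1/12 : ℝ) * (∑ i, (eval ![(2 : ℝ), (0 : ℝ), (1 : ℝ)] (f i))^2) := by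
          simp only [Finset.sum_add_distrib, ← Finset.mul_sum]
      _ = a^2 := by rw [hE (1 : ℝ) (0 : ℝ) (1 : ℝ), hE ((-1) : ℝ) (0 : ℝ) (1 : ℝ), hE (2 : ℝ) (0 : ℝ) (1 : ℝ)]; ring
  have keyQ2 : ∀ i, (coeff (mk3 0 3 1) (f i))^2 = (-(1/2) : ℝ) * (eval ![(0 : ℝ), (1 : ℝ), (1 : ℝ)] (f i))^2 + (1/6 : ℝ) * (eval ![(0 : ℝ), ((-1) : ℝ), (1 : ℝ)] (f i))^2 + (1/48 : ℝ) * (eval ![(0 : ℝ), (2 : ℝ), (1 : ℝ)] (f i))^2 := by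
    intro i
    simp only [hevalF]
    simp only [hdn400, hdn040, hdn004, hdn130, hdn301, hdn013]
    ring
  have hQ2 : ∑ i, ((coeff (mk3 0 3 1) (f i))^2) = b^2 := by
    calc ∑ i, ((coeff (mk3 0 3 1) (f i))^2) = ∑ i, ((-(1/2) : ℝ) * (eval ![(0 : ℝ), (1 : ℝ), (1 : ℝ)] (f i))^2 + (1/6 : ℝ) * (eval ![(0 : ℝ), ((-1) : ℝ), (1 : ℝ)] (f i))^2 + (1/48 : ℝ) * (eval ![(0 : ℝ), (2 : ℝ), (1 : ℝ)] (f i))^2) := Finset.sum_congr rfl (fun i _ => keyQ2 i)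
      _ = (-(1/2) : ℝ) * (∑ i, (eval ![(0 : ℝ), (1 : ℝ), (1 : ℝ)] (f i))^2) + (1/6 : ℝ) * (∑ i, (eval ![(0 : ℝ), ((-1) : ℝ), (1 : ℝ)] (f i))^2) + (1/48 : ℝ) * (∑ i, (eval ![(0 : ℝ), (2 : ℝ), (1 : ℝ)] (f i))^2) := by
          simp only [Finset.sum_add_distrib, ← Finset.mul_sum]
      _ = b^2 := by rw [hE (0 : ℝ) (1 : ℝ) (1 : ℝ), hE (0 : ℝ) ((-1) : ℝ) (1 : ℝ), hE (0 : ℝ) (2 : ℝ) (1 : ℝ)]; ring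
  have hvpp : ∀ i, eval ![(1 : ℝ), (1 : ℝ), (1 : ℝ)] (f i) = 0 := by
    intro i
    have h0 : ∑ j, (eval ![(1 : ℝ), (1 : ℝ), (1 : ℝ)] (f j))^2 = 0 := by rw [hE (1 : ℝ) (1 : ℝ) (1 : ℝ)]; ring
    exact real_sumsq h0 i
  have hvpm : ∀ i, eval ![(1 : ℝ), (1 : ℝ), ((-1) : ℝ)] (f i) = 0 := by
    intro i
    have h0 : ∑ j, (eval ![(1 : ℝ), (1 : ℝ), ((-1) : ℝ)] (f j))^2 = 0 := by rw [hE (1 : ℝ) (1 : ℝ) ((-1) : ℝ)]; ring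
    exact real_sumsq h0 i
  have hvmp : ∀ i, eval ![(1 : ℝ), ((-1) : ℝ), (1 : ℝ)] (f i) = 0 := by
    intro i
    have h0 : ∑ j, (eval ![(1 : ℝ), ((-1) : ℝ), (1 : ℝ)] (f j))^2 = 0 := by rw [hE (1 : ℝ) ((-1) : ℝ) (1 : ℝ)]; ring
    exact real_sumsq h0 i
  have hvmm : ∀ i, eval ![(1 : ℝ), ((-1) : ℝ), ((-1) : ℝ)] (f i) = 0 := by
    intro i
    have h0 : ∑ j, (eval ![(1 : ℝ), ((-1) : ℝ), ((-1) : ℝ)] (f j))^2 = 0 := by rw [hE (1 : ℝ) ((-1) : ℝ) ((-1) : ℝ)]; ring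
    exact real_sumsq h0 i
  have hvl : ∀ i, coeff (mk3 1 1 2) (f i) = -(coeff (mk3 3 1 0) (f i)) := by
    intro i
    have e1 := hvpp i
    have e2 := hvpm i
    have e3 := hvmp i
    have e4 := hvmm i
    simp only [hevalF, hdn400, hdn040, hdn004, hdn130, hdn301, hdn013] at e1 e2 e3 e4
    linarith [e1, e2, e3, e4]
  have hvj : ∀ i, coeff (mk3 2 1 1) (f i) = -(coeff (mk3 0 3 1) (f i)) := by
    intro i
    have e1 := hvpp i
    have e2 := hvpm i
    have e3 := hvmp i
    have e4 := hvmm i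
    simp only [hevalF, hdn400, hdn040, hdn004, hdn130, hdn301, hdn013] at e1 e2 e3 e4
    linarith [e1, e2, e3, e4]
  have keyBig : ∀ i, (2*(coeff (mk3 3 1 0) (f i))*(coeff (mk3 1 1 2) (f i)) + 2*(coeff (mk3 2 2 0) (f i))*(coeff (mk3 2 0 2) (f i)) + (coeff (mk3 2 1 1) (f i))^2) = (1/576 : ℝ) * (eval ![(1 : ℝ), ((-2) : ℝ), ((-2) : ℝ)] (f i))^2 + (1/60 : ℝ) * (eval ![(1 : ℝ), ((-2) : ℝ), ((-1) : ℝ)] (f i))^2 + (5/48 : ℝ) * (eval ![(1 : ℝ), ((-2) : ℝ), (0 : ℝ)] (f i))^2 + (-(1/36) : ℝ) * (eval ![(1 : ℝ), ((-2) : ℝ), (1 : ℝ)] (f i))^2 + (1/576 : ℝ) * (eval ![(1 : ℝ), ((-2) : ℝ), (2 : ℝ)] (f i))^2 + (-(1/36) : ℝ) * (eval ![(1 : ℝ), ((-1) : ℝ), ((-2) : ℝ)] (f i))^2 + (-(4/9) : ℝ) * (eval ![(1 : ℝ), ((-1) : ℝ), ((-1) : ℝ)] (f i))^2 + (-(5/4)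 : ℝ) * (eval ![(1 : ℝ), ((-1) : ℝ), (0 : ℝ)] (f i))^2 + (4/9 : ℝ) * (eval ![(1 : ℝ), ((-1) : ℝ), (1 : ℝ)] (f i))^2 + (-(1/36) : ℝ) * (eval ![(1 : ℝ), ((-1) : ℝ), (2 : ℝ)] (f i))^2 + (5/48 : ℝ) * (eval ![(1 : ℝ), (0 : ℝ), ((-2) : ℝ)] (f i))^2 + (-(13/2) : ℝ) * (eval ![(1 : ℝ), (0 : ℝ), ((-1) : ℝ)] (f i))^2 + (5/6 : ℝ) * (eval ![(1 : ℝ), (0 : ℝ), (1 : ℝ)] (f i))^2 + (-(1/36) : ℝ) * (eval ![(1 : ℝ), (1 : ℝ), ((-2) : ℝ)] (f i))^2 + (-(4/9) : ℝ) * (eval ![(1 : ℝ), (1 : ℝ), ((-1) : ℝ)] (f i))^2 + (-(5/12) : ℝ) * (eval ![(1 : ℝ), (1 : ℝ), (0 : ℝ)] (f i))^2 + (4/9 : ℝ) * (eval ![(1 : ℝ), (1 : ℝ), (1 : ℝ)] (f i))^2 + (-(1/36) : ℝ) * (eval ![(1 : ℝ), (1 : ℝ), (2 : ℝ)] (f i))^2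 + (1/576 : ℝ) * (eval ![(1 : ℝ), (2 : ℝ), ((-2) : ℝ)] (f i))^2 + (1/60 : ℝ) * (eval ![(1 : ℝ), (2 : ℝ), ((-1) : ℝ)] (f i))^2 + (-(1/36) : ℝ) * (eval ![(1 : ℝ), (2 : ℝ), (1 : ℝ)] (f i))^2 + (1/576 : ℝ) * (eval ![(1 : ℝ), (2 : ℝ), (2 : ℝ)] (f i))^2 + (1/90 : ℝ) * (eval ![(2 : ℝ), ((-1) : ℝ), ((-2) : ℝ)] (f i))^2 + (1/90 : ℝ) * (eval ![(2 : ℝ), (1 : ℝ), ((-2) : ℝ)] (f i))^2 := by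
    intro i
    simp only [hevalF]
    simp only [hdn400, hdn040, hdn004, hdn130, hdn301, hdn013]
    ring
  have hBig : ∑ i, ((2*(coeff (mk3 3 1 0) (f i))*(coeff (mk3 1 1 2) (f i)) + 2*(coeff (mk3 2 2 0) (f i))*(coeff (mk3 2 0 2) (f i)) + (coeff (mk3 2 1 1) (f i))^2)) = c^2 - 3*a^2 := by
    calc ∑ i, ((2*(coeff (mk3 3 1 0) (f i))*(coeff (mk3 1 1 2) (f i)) + 2*(coeff (mk3 2 2 0) (f i))*(coeff (mk3 2 0 2) (f i)) + (coeff (mk3 2 1 1) (f i))^2)) = ∑ i, ((1/576 : ℝ) * (eval ![(1 : ℝ), ((-2) : ℝ), ((-2) : ℝ)] (f i))^2 + (1/60 : ℝ) * (eval ![(1 : ℝ), ((-2) : ℝ), ((-1) : ℝ)] (f i))^2 + (5/48 : ℝ) * (eval ![(1 : ℝ), ((-2) : ℝ), (0 : ℝ)] (f i))^2 + (-(1/36) : ℝ) * (eval ![(1 : ℝ), ((-2) : ℝ), (1 : ℝ)] (f i))^2 + (1/576 : ℝ) * (eval ![(1 : ℝ), ((-2) : ℝ), (2 : ℝ)] (f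 i))^2 + (-(1/36) : ℝ) * (eval ![(1 : ℝ), ((-1) : ℝ), ((-2) : ℝ)] (f i))^2 + (-(4/9) : ℝ) * (eval ![(1 : ℝ), ((-1) : ℝ), ((-1) : ℝ)] (f i))^2 + (-(5/4) : ℝ) * (eval ![(1 : ℝ), ((-1) : ℝ), (0 : ℝ)] (f i))^2 + (4/9 : ℝ) * (eval ![(1 : ℝ), ((-1) : ℝ), (1 : ℝ)] (f i))^2 + (-(1/36) : ℝ) * (eval ![(1 : ℝ), ((-1) : ℝ), (2 : ℝ)] (f i))^2 + (5/48 : ℝ) * (eval ![(1 : ℝ), (0 : ℝ), ((-2) : ℝ)] (f i))^2 + (-(13/2) : ℝ) * (eval ![(1 : ℝ), (0 : ℝ), ((-1) : ℝ)] (f i))^2 + (5/6 : ℝ) * (eval ![(1 : ℝ), (0 : ℝ), (1 : ℝ)] (f i))^2 + (-(1/36) : ℝ) * (eval ![(1 : ℝ), (1 : ℝ), ((-2) : ℝ)] (f i))^2 + (-(4/9) : ℝ) * (eval ![(1 : ℝ), (1 : ℝ), ((-1) : ℝ)] (f i))^2 + (-(5/12) : ℝ) * (eval ![(1 : ℝ),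 (1 : ℝ), (0 : ℝ)] (f i))^2 + (4/9 : ℝ) * (eval ![(1 : ℝ), (1 : ℝ), (1 : ℝ)] (f i))^2 + (-(1/36) : ℝ) * (eval ![(1 : ℝ), (1 : ℝ), (2 : ℝ)] (f i))^2 + (1/576 : ℝ) * (eval ![(1 : ℝ), (2 : ℝ), ((-2) : ℝ)] (f i))^2 + (1/60 : ℝ) * (eval ![(1 : ℝ), (2 : ℝ), ((-1) : ℝ)] (f i))^2 + (-(1/36) : ℝ) * (eval ![(1 : ℝ), (2 : ℝ), (1 : ℝ)] (f i))^2 + (1/576 : ℝ) * (eval ![(1 : ℝ), (2 : ℝ), (2 : ℝ)] (f i))^2 + (1/90 : ℝ) * (eval ![(2 : ℝ), ((-1) : ℝ), ((-2) : ℝ)] (f i))^2 + (1/90 : ℝ) * (eval ![(2 : ℝ), (1 : ℝ), ((-2) : ℝ)] (f i))^2) := Finset.sum_congr rfl (fun i _ => keyBig i)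
      _ = (1/576 : ℝ) * (∑ i, (eval ![(1 : ℝ), ((-2) : ℝ), ((-2) : ℝ)] (f i))^2) + (1/60 : ℝ) * (∑ i, (eval ![(1 : ℝ), ((-2) : ℝ), ((-1) : ℝ)] (f i))^2) + (5/48 : ℝ) * (∑ i, (eval ![(1 : ℝ), ((-2) : ℝ), (0 : ℝ)] (f i))^2) + (-(1/36) : ℝ) * (∑ i, (eval ![(1 : ℝ), ((-2) : ℝ), (1 : ℝ)] (f i))^2) + (1/576 : ℝ) * (∑ i, (eval ![(1 : ℝ), ((-2) : ℝ), (2 : ℝ)] (f i))^2) + (-(1/36) : ℝ) * (∑ i, (eval ![(1 : ℝ), ((-1) : ℝ), ((-2) : ℝ)] (f i))^2) + (-(4/9) : ℝ) * (∑ i, (eval ![(1 : ℝ), ((-1) : ℝ), ((-1) : ℝ)] (f i))^2) + (-(5/4) : ℝ) * (∑ i, (eval ![(1 : ℝ), ((-1) : ℝ), (0 : ℝ)] (f i))^2) + (4/9 : ℝ) * (∑ i, (eval ![(1 : ℝ), ((-1) : ℝ), (1 : ℝ)] (f i))^2) + (-(1/36) : ℝ) * (∑ i, (eval ![(1 : ℝ),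 ((-1) : ℝ), (2 : ℝ)] (f i))^2) + (5/48 : ℝ) * (∑ i, (eval ![(1 : ℝ), (0 : ℝ), ((-2) : ℝ)] (f i))^2) + (-(13/2) : ℝ) * (∑ i, (eval ![(1 : ℝ), (0 : ℝ), ((-1) : ℝ)] (f i))^2) + (5/6 : ℝ) * (∑ i, (eval ![(1 : ℝ), (0 : ℝ), (1 : ℝ)] (f i))^2) + (-(1/36) : ℝ) * (∑ i, (eval ![(1 : ℝ), (1 : ℝ), ((-2) : ℝ)] (f i))^2) + (-(4/9) : ℝ) * (∑ i, (eval ![(1 : ℝ), (1 : ℝ), ((-1) : ℝ)] (f i))^2) + (-(5/12) : ℝ) * (∑ i, (eval ![(1 : ℝ), (1 : ℝ), (0 : ℝ)] (f i))^2) + (4/9 : ℝ) * (∑ i, (eval ![(1 : ℝ), (1 : ℝ), (1 : ℝ)] (f i))^2) + (-(1/36) : ℝ) * (∑ i, (eval ![(1 : ℝ), (1 : ℝ), (2 : ℝ)] (f i))^2) + (1/576 : ℝ) * (∑ i, (eval ![(1 : ℝ), (2 : ℝ), ((-2) : ℝ)] (f i))^2) + (1/60 : ℝ) * (∑ i, (eval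 ![(1 : ℝ), (2 : ℝ), ((-1) : ℝ)] (f i))^2) + (-(1/36) : ℝ) * (∑ i, (eval ![(1 : ℝ), (2 : ℝ), (1 : ℝ)] (f i))^2) + (1/576 : ℝ) * (∑ i, (eval ![(1 : ℝ), (2 : ℝ), (2 : ℝ)] (f i))^2) + (1/90 : ℝ) * (∑ i, (eval ![(2 : ℝ), ((-1) : ℝ), ((-2) : ℝ)] (f i))^2) + (1/90 : ℝ) * (∑ i, (eval ![(2 : ℝ), (1 : ℝ), ((-2) : ℝ)] (f i))^2) := by
          simp only [Finset.sum_add_distrib, ← Finset.mul_sum]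
      _ = c^2 - 3*a^2 := by rw [hE (1 : ℝ) ((-2) : ℝ) ((-2) : ℝ), hE (1 : ℝ) ((-2) : ℝ) ((-1) : ℝ), hE (1 : ℝ) ((-2) : ℝ) (0 : ℝ), hE (1 : ℝ) ((-2) : ℝ) (1 : ℝ), hE (1 : ℝ) ((-2) : ℝ) (2 : ℝ), hE (1 : ℝ) ((-1) : ℝ) ((-2) : ℝ), hE (1 : ℝ) ((-1) : ℝ) ((-1) : ℝ), hE (1 : ℝ) ((-1) : ℝ) (0 : ℝ), hE (1 : ℝ) ((-1) : ℝ) (1 : ℝ), hE (1 : ℝ) ((-1) : ℝ) (2 : ℝ), hE (1 : ℝ) (0 : ℝ) ((-2) : ℝ), hE (1 : ℝ) (0 : ℝ) ((-1) : ℝ), hE (1 : ℝ) (0 : ℝ) (1 : ℝ), hE (1 : ℝ) (1 : ℝ) ((-2) : ℝ), hE (1 : ℝ) (1 : ℝ) ((-1) : ℝ), hE (1 : ℝ) (1 : ℝ) (0 : ℝ), hE (1 : ℝ) (1 : ℝ) (1 : ℝ), hE (1 : ℝ) (1 : ℝ) (2 : ℝ), hE (1 : ℝ) (2 : ℝ)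 ((-2) : ℝ), hE (1 : ℝ) (2 : ℝ) ((-1) : ℝ), hE (1 : ℝ) (2 : ℝ) (1 : ℝ), hE (1 : ℝ) (2 : ℝ) (2 : ℝ), hE (2 : ℝ) ((-1) : ℝ) ((-2) : ℝ), hE (2 : ℝ) (1 : ℝ) ((-2) : ℝ)]; ring
  have hsum2 : ∑ i, ((-2)*(coeff (mk3 3 1 0) (f i))^2 + 2*(coeff (mk3 2 2 0) (f i) * coeff (mk3 2 0 2) (f i)) + (coeff (mk3 0 3 1) (f i))^2) = c^2 - 3*a^2 := by
    calc ∑ i, ((-2)*(coeff (mk3 3 1 0) (f i))^2 + 2*(coeff (mk3 2 2 0) (f i) * coeff (mk3 2 0 2) (f i)) + (coeff (mk3 0 3 1) (f i))^2)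
        = ∑ i, ((2*(coeff (mk3 3 1 0) (f i))*(coeff (mk3 1 1 2) (f i)) + 2*(coeff (mk3 2 2 0) (f i))*(coeff (mk3 2 0 2) (f i)) + (coeff (mk3 2 1 1) (f i))^2)) := Finset.sum_congr rfl (fun i _ => by rw [hvl i, hvj i]; ring)
      _ = c^2 - 3*a^2 := hBig
  have hde : ∑ i, (coeff (mk3 2 2 0) (f i) * coeff (mk3 2 0 2) (f i)) = (c^2 - a^2 - b^2)/2 := by
    have h1 : (-2 : ℝ) * (∑ i, (coeff (mk3 3 1 0) (f i))^2) + 2 * (∑ i, (coeff (mk3 2 2 0) (f i) * coeff (mk3 2 0 2) (f i)))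
        + (∑ i, (coeff (mk3 0 3 1) (f i))^2) = c^2 - 3*a^2 := by
      rw [← hsum2]
      simp only [Finset.sum_add_distrib, ← Finset.mul_sum]
    rw [hP2, hQ2] at h1
    linarith
  have hCS : (∑ i, (coeff (mk3 2 2 0) (f i) * coeff (mk3 2 0 2) (f i)))^2
      ≤ (∑ i, (coeff (mk3 2 2 0) (f i))^2) * (∑ i, (coeff (mk3 2 0 2) (f i))^2) :=
    Finset.sum_mul_sq_le_sq_mul_sq Finset.univ _ _
  rw [hde, hD2, hE2] at hCS
  nlinarith [hCS]


/-- (a²x² + b²y² + c²z²)·S is sos iff 2(a²b² + a²c² + b²c²) ≥ a⁴ + b⁴ + c⁴. -/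
theorem quadratic_mul_choiLam_sos_iff (a b c : ℝ) :
    IsSos ((C (a ^ 2) * X 0 ^ 2 + C (b ^ 2) * X 1 ^ 2 + C (c ^ 2) * X 2 ^ 2) * ChoiLam) ↔
      2 * (a ^ 2 * b ^ 2 + a ^ 2 * c ^ 2 + b ^ 2 * c ^ 2) ≥ a ^ 4 + b ^ 4 + c ^ 4 := by
  constructor
  · exact necessity a b c
  · exact suff a b c
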